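/- Let ξ, η ∈ ℂⁿ with ξ ≠ 0. There exists a positive semidefinite matrix A ∈ ℂⁿˣⁿ with Aξ = η if and only if ξ*η > 0 (i.e., ξ*η is a positive real number) or η = 0. -/

import Mathlib

open Matrix
open scoped ComplexOrder

/-!
If `A ⪰ 0`, then `ξ* A ξ ≥ 0`, and `ξ* A ξ = 0` forces `A ξ = 0`. Conversely, if `c = ξ* η > 0`,
the rank-one matrix `c⁻¹ η η*` is positive semidefinite and maps `ξ` to `c⁻¹ (η* ξ) η = η`.
-/

namespace Matrix

variable {𝕜 ι : Type*} [RCLike 𝕜] [Fintype ι]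

theorem PosSemidef.mulVec_eq_zero_or_dotProduct_mulVec_pos {A : Matrix ι ι 𝕜}
    (hA : A.PosSemidef) (x : ι → 𝕜) : A *ᵥ x = 0 ∨ 0 < star x ⬝ᵥ A *ᵥ x :=
  (hA.dotProduct_mulVec_nonneg x).eq_or_lt.imp ((hA.dotProduct_mulVec_zero_iff x).mp ∘ Eq.symm) id

theorem posSemidef_smul_vecMulVec_mulVec_eq {x y : ι → 𝕜} (h : 0 < star x ⬝ᵥ y) :
    ((star x ⬝ᵥ y)⁻¹ • vecMulVec y (star y)).PosSemidef ∧
      ((star x ⬝ᵥ y)⁻¹ • vecMulVec y (star y)) *ᵥ x = y := by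
  have hstar : star y ⬝ᵥ x = star x ⬝ᵥ y := calc
    star y ⬝ᵥ x = star (star x ⬝ᵥ y) := by rw [← star_dotProduct_star, star_star]
    _ = star x ⬝ᵥ y := (IsSelfAdjoint.of_nonneg h.le).star_eq
  refine ⟨(posSemidef_vecMulVec_self_star y).smul (inv_nonneg.mpr h.le), ?_⟩
  rw [smul_mulVec, vecMulVec_mulVec, hstar, op_smul_eq_smul, smul_smul, inv_mul_cancel₀ h.ne',
    one_smul]

theorem exists_posSemidef_mulVec_eq_iff (x y : ι → 𝕜) :
    (∃ A : Matrix ι ι 𝕜, A.PosSemidef ∧ A *ᵥ x = y) ↔ 0 < star x ⬝ᵥ y ∨ y = 0 := by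
  constructor
  · rintro ⟨A, hA, rfl⟩
    exact (hA.mulVec_eq_zero_or_dotProduct_mulVec_pos x).symm
  · rintro (h | rfl)
    · exact ⟨_, posSemidef_smul_vecMulVec_mulVec_eq h⟩
    · exact ⟨0, .zero, zero_mulVec x⟩

end Matrix

theorem stmt_0_general (n : ℕ) (ξ η : Fin n → ℂ) :
    (∃ A : Matrix (Fin n) (Fin n) ℂ, A.PosSemidef ∧ A.mulVec ξ = η) ↔
      ((∃ r : ℝ, 0 < r ∧ dotProduct (star ξ) η = (r : ℂ)) ∨ η = 0) := by
  rw [exists_posSemidef_mulVec_eq_iff, RCLike.pos_iff_exists_ofReal]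
  simp only [gt_iff_lt, eq_comm, RCLike.ofReal_eq_complex_ofReal]

theorem stmt_0 (n : ℕ) (ξ η : Fin n → ℂ) (hξ : ξ ≠ 0) :
    (∃ A : Matrix (Fin n) (Fin n) ℂ, A.PosSemidef ∧ A.mulVec ξ = η) ↔
      ((∃ r : ℝ, 0 < r ∧ dotProduct (star ξ) η = (r : ℂ)) ∨ η = 0) :=
  stmt_0_general n ξ η
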